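/- arXiv:1910.11721 — 2 statements merged into one kernel-verified Lean document; each statement's English description precedes it below -/
import Mathlib

section
/- Let m ≥ 2, e ∈ (0,1), and b = (1−e)/(m−1), and let θ be the Plackett-Luce parameter over m alternatives with θ_1 = e and θ_j = b for all j ≥ 2. Then for every 1 ≤ i ≤ m, the probability under PL(θ) that alternative a_1 is ranked at the i-th position — i.e., the sum of Pr_PL(R|θ) over all linear orders R placing a_1 at position i — equals [∏_{p=0}^{i−2} (m−1−p)·b/(1 − p·b)] · e/(1 − (i−1)·b), which equals ((m−1)!/(m−i)!) · e · b^{i−1} / ∏_{p=0}^{i−1}(1 − p·b). -/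
open Finset

/-- PL probability of the full ranking (linear order) `σ`, where `σ p` is the
alternative ranked at position `p`:
`∏_{p=1}^{m} θ_{σ(p)} / (∑_{q=p}^m θ_{σ(q)})` (recall `∑_i θ_i = 1`). -/
noncomputable def PLlin {m : ℕ} (θ : Fin m → ℝ) (σ : Equiv.Perm (Fin m)) : ℝ :=
  ∏ p : Fin m, θ (σ p) / (1 - ∑ q ∈ univ.filter (fun q : Fin m => q < p), θ (σ q))

/-- Auxiliary: falling-factorial-type product. -/
lemma prod_sub_factorial : ∀ (j k : ℕ), j ≤ k →
    (∏ p ∈ range j, (k - p)) * Nat.factorial (k - j) = Nat.factorial k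
  | 0, k, _ => by simp
  | j + 1, k, h => by
    have h1 : j ≤ k := by omega
    have h2 : k - j = (k - (j + 1)) + 1 := by omega
    rw [prod_range_succ, mul_assoc,
      show (k - j) * Nat.factorial (k - (j + 1)) = Nat.factorial (k - j) by
        rw [h2, Nat.factorial_succ]]
    exact prod_sub_factorial j k h1

/-- Auxiliary: the number of permutations of `Fin (n+1)` sending `k` to `z`
is `n!`. -/
lemma card_perm_apply_eq {n : ℕ} (k z : Fin (n + 1)) :
    (univ.filter (fun σ : Equiv.Perm (Fin (n + 1)) => σ k = z)).card
      = Nat.factorial n := by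
  have hfst : ∀ τ : Equiv.Perm (Fin (n + 1)),
      (Equiv.Perm.decomposeFin τ).1 = τ 0 := by
    intro τ
    have h2 : τ 0 = (Equiv.Perm.decomposeFin τ).1 := by
      have := Equiv.Perm.decomposeFin_symm_apply_zero
        (Equiv.Perm.decomposeFin τ).1 (Equiv.Perm.decomposeFin τ).2
      simpa using this
    exact h2.symm
  have hcard : Nat.factorial n = (univ : Finset (Equiv.Perm (Fin n))).card := by
    rw [Finset.card_univ, Fintype.card_perm, Fintype.card_fin]
  rw [hcard]
  refine Finset.card_bij'
    (fun σ _ => (Equiv.Perm.decomposeFin (σ * Equiv.swap 0 k)).2)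
    (fun e _ => Equiv.Perm.decomposeFin.symm (z, e) * Equiv.swap 0 k)
    (fun σ _ => Finset.mem_univ _) ?_ ?_ ?_
  · intro e _
    simp only [Finset.mem_filter, Finset.mem_univ, true_and]
    rw [Equiv.Perm.mul_apply, Equiv.swap_apply_right,
      Equiv.Perm.decomposeFin_symm_apply_zero]
  · intro σ hσ
    have hσk : σ k = z := (Finset.mem_filter.mp hσ).2
    have hz : z = (Equiv.Perm.decomposeFin (σ * Equiv.swap 0 k)).1 := by
      rw [hfst, Equiv.Perm.mul_apply, Equiv.swap_apply_left, hσk]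
    show Equiv.Perm.decomposeFin.symm
        (z, (Equiv.Perm.decomposeFin (σ * Equiv.swap 0 k)).2) * Equiv.swap 0 k = σ
    rw [hz]
    simp [mul_assoc]
  · intro e _
    simp [mul_assoc]

/-- **Equation (2) of the paper**: for the near-uniform PL parameter with
`θ_1 = e` and `θ_j = b = (1-e)/(m-1)` for `j ≥ 2`, the probability that
alternative `a_1` is ranked at the `i`-th position (`1 ≤ i ≤ m`) equals
`[∏_{p=0}^{i-2} (m-1-p)·b/(1-p·b)] · e/(1-(i-1)·b)`, which equals
`((m-1)!/(m-i)!) · e · b^{i-1} / ∏_{p=0}^{i-1} (1-p·b)`. -/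
theorem PL_position_probability
    (m : ℕ) (hm : 2 ≤ m) (e : ℝ) (he : 0 < e ∧ e < 1)
    (b : ℝ) (hb : b = (1 - e) / ((m : ℝ) - 1))
    (θ : Fin m → ℝ) (hθ : ∀ j : Fin m, θ j = if (j : ℕ) = 0 then e else b)
    (i : ℕ) (hi1 : 1 ≤ i) (him : i ≤ m) :
    (∑ σ ∈ univ.filter
        (fun σ : Equiv.Perm (Fin m) => σ ⟨i - 1, by omega⟩ = ⟨0, by omega⟩),
        PLlin θ σ
      = (∏ p ∈ range (i - 1), ((m : ℝ) - 1 - p) * b / (1 - (p : ℝ) * b))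
          * (e / (1 - ((i : ℝ) - 1) * b)))
    ∧
    (∑ σ ∈ univ.filter
        (fun σ : Equiv.Perm (Fin m) => σ ⟨i - 1, by omega⟩ = ⟨0, by omega⟩),
        PLlin θ σ
      = ((Nat.factorial (m - 1) : ℝ) / (Nat.factorial (m - i) : ℝ))
          * e * b ^ (i - 1) / ∏ p ∈ range i, (1 - (p : ℝ) * b)) := by
  -- basic numeric facts
  have hm1 : ((m : ℝ) - 1) ≠ 0 := by
    have : (2 : ℝ) ≤ (m : ℝ) := by exact_mod_cast hm
    linarith
  have hb' : 1 - e = ((m : ℝ) - 1) * b := by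
    rw [hb]; field_simp
  have hbne : b ≠ 0 := by
    rw [hb]
    have h2 : (2 : ℝ) ≤ (m : ℝ) := by exact_mod_cast hm
    have : (0 : ℝ) < (1 - e) / ((m : ℝ) - 1) := by
      apply div_pos <;> linarith [he.1, he.2]
    linarith
  set pos : Fin m := ⟨i - 1, by omega⟩ with hpos
  set z : Fin m := ⟨0, by omega⟩ with hz
  -- the common per-position factor as a function of the position index
  set G : ℕ → ℝ := fun p =>
    (if p = i - 1 then e else b) /
      (1 - ((p : ℝ) * b + if i - 1 < p then e - b else 0)) with hG
  -- the common value of `PLlin θ σ` for every `σ` with `σ pos = z`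
  have hval : ∀ σ : Equiv.Perm (Fin m), σ pos = z →
      PLlin θ σ = ∏ p ∈ range m, G p := by
    intro σ hσ
    have hiff : ∀ q : Fin m, ((σ q : ℕ) = 0 ↔ q = pos) := by
      intro q
      constructor
      · intro h
        apply σ.injective
        rw [hσ]
        exact Fin.ext (by simpa using h)
      · intro h; rw [h, hσ]
    unfold PLlin
    rw [← Fin.prod_univ_eq_prod_range]
    apply Finset.prod_congr rfl
    intro p _
    have hfilt : univ.filter (fun q : Fin m => q < p) = Finset.Iio p := by
      ext q; simp
    -- numerator
    have hnum : θ (σ p) = if (p : ℕ) = i - 1 then e else b := by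
      rw [hθ]
      by_cases h : (p : ℕ) = i - 1
      · have : p = pos := Fin.ext (by simpa using h)
        rw [if_pos ((hiff p).mpr this), if_pos h]
      · have : ¬ p = pos := fun hc => h (by rw [hc])
        rw [if_neg (fun hc => this ((hiff p).mp hc)), if_neg h]
    -- denominator
    have hden : ∑ q ∈ univ.filter (fun q : Fin m => q < p), θ (σ q)
        = (p : ℕ) * b + (if i - 1 < (p : ℕ) then e - b else 0) := by
      rw [hfilt]
      have : ∀ q ∈ Finset.Iio p, θ (σ q) = b + (if q = pos then e - b else 0) := by
        intro q _
        rw [hθ]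
        by_cases h : q = pos
        · rw [if_pos ((hiff q).mpr h), if_pos h]; ring
        · rw [if_neg (fun hc => h ((hiff q).mp hc)), if_neg h]; ring
      rw [Finset.sum_congr rfl this, Finset.sum_add_distrib, Finset.sum_const,
        Fin.card_Iio, Finset.sum_ite_eq']
      have hmem : pos ∈ Finset.Iio p ↔ i - 1 < (p : ℕ) := by
        simp [Finset.mem_Iio, Fin.lt_def, hpos]
      rw [nsmul_eq_mul]
      by_cases h : i - 1 < (p : ℕ)
      · rw [if_pos (hmem.mpr h), if_pos h]
      · rw [if_neg (fun hc => h (hmem.mp hc)), if_neg h]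
    rw [hnum, hden, hG]
  -- product over the tail positions
  have hIco : ∀ p ∈ Finset.Ico i m, G p = ((m : ℝ) - p)⁻¹ := by
    intro p hp
    rw [Finset.mem_Ico] at hp
    have h1 : ¬ (p = i - 1) := by omega
    have h2 : i - 1 < p := by omega
    have hden : (1 : ℝ) - ((p : ℝ) * b + (e - b)) = ((m : ℝ) - p) * b := by
      linear_combination hb'
    rw [hG]
    simp only [if_neg h1, if_pos h2]
    rw [hden, mul_comm, div_mul_eq_div_div, div_self hbne, one_div]
  have htail : ∏ p ∈ Finset.Ico i m, G p = ((Nat.factorial (m - i) : ℝ))⁻¹ := by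
    rw [Finset.prod_congr rfl hIco, Finset.prod_inv_distrib]
    congr 1
    have hc : ∀ p ∈ Finset.Ico i m, ((m : ℝ) - p) = ((m - p : ℕ) : ℝ) := by
      intro p hp
      rw [Finset.mem_Ico] at hp
      have : p ≤ m := by omega
      push_cast [Nat.cast_sub this]; ring
    rw [Finset.prod_congr rfl hc, ← Nat.cast_prod]
    congr 1
    rw [Finset.prod_Ico_eq_prod_range]
    have : ∀ p ∈ range (m - i), m - (i + p) = (m - i) - p := by
      intro p _; omega
    rw [Finset.prod_congr rfl this]
    have := prod_sub_factorial (m - i) (m - i) le_rfl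
    simpa using this
  -- the head product and middle factor
  have hhead : ∀ p ∈ range (i - 1), G p = b / (1 - (p : ℝ) * b) := by
    intro p hp
    rw [Finset.mem_range] at hp
    have h1 : ¬ (p = i - 1) := by omega
    have h2 : ¬ (i - 1 < p) := by omega
    rw [hG]
    simp only [if_neg h1, if_neg h2, add_zero]
  have hmid : G (i - 1) = e / (1 - ((i : ℝ) - 1) * b) := by
    rw [hG]
    have h1 : ((i - 1 : ℕ) : ℝ) = (i : ℝ) - 1 := by
      push_cast [Nat.cast_sub hi1]; ring
    simp [h1]
  -- full product
  have hprod : ∏ p ∈ range m, G p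
      = (∏ p ∈ range (i - 1), b / (1 - (p : ℝ) * b))
          * (e / (1 - ((i : ℝ) - 1) * b)) * ((Nat.factorial (m - i) : ℝ))⁻¹ := by
    rw [← Finset.prod_range_mul_prod_Ico G him, htail]
    congr 1
    have hi' : i = (i - 1) + 1 := by omega
    rw [hi', Finset.prod_range_succ, ← hi', hmid, Finset.prod_congr rfl hhead]
  -- the summation
  obtain ⟨n, rfl⟩ : ∃ n, m = n + 1 := ⟨m - 1, by omega⟩
  have hsum : ∑ σ ∈ univ.filter
      (fun σ : Equiv.Perm (Fin (n + 1)) => σ ⟨i - 1, by omega⟩ = ⟨0, by omega⟩),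
      PLlin θ σ
      = ((Nat.factorial n : ℝ))
        * ((∏ p ∈ range (i - 1), b / (1 - (p : ℝ) * b))
          * (e / (1 - ((i : ℝ) - 1) * b))
          * ((Nat.factorial (n + 1 - i) : ℝ))⁻¹) := by
    rw [Finset.sum_congr rfl (fun σ hσ => by
      rw [hval σ (Finset.mem_filter.mp hσ).2, hprod])]
    rw [Finset.sum_const, card_perm_apply_eq, nsmul_eq_mul]
  -- nat product for the binomial-type coefficient
  have hfaceq : (∏ p ∈ range (i - 1), (n - p)) * Nat.factorial (n + 1 - i)
      = Nat.factorial n := by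
    have := prod_sub_factorial (i - 1) n (by omega)
    rwa [show n - (i - 1) = n + 1 - i by omega] at this
  have hcastprod : ∏ p ∈ range (i - 1), (((n : ℕ) + 1 : ℝ) - 1 - p)
      = ((∏ p ∈ range (i - 1), (n - p) : ℕ) : ℝ) := by
    rw [Nat.cast_prod]
    apply Finset.prod_congr rfl
    intro p hp
    rw [Finset.mem_range] at hp
    have hpn : p ≤ n := by omega
    push_cast [Nat.cast_sub hpn]; ring
  have hfne : ((Nat.factorial (n + 1 - i) : ℝ)) ≠ 0 :=
    Nat.cast_ne_zero.mpr (Nat.factorial_ne_zero _)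
  have hnfac : ((Nat.factorial n : ℝ))
      = ((∏ p ∈ range (i - 1), (n - p) : ℕ) : ℝ) * (Nat.factorial (n + 1 - i) : ℝ) := by
    rw [← Nat.cast_mul, hfaceq]
  constructor
  · -- first form
    rw [hsum]
    have hsimp : ∏ p ∈ range (i - 1), (((n + 1 : ℕ) : ℝ) - 1 - ↑p) * b / (1 - (p : ℝ) * b)
        = ((∏ p ∈ range (i - 1), (n - p) : ℕ) : ℝ)
            * ∏ p ∈ range (i - 1), b / (1 - (p : ℝ) * b) := by
      rw [Nat.cast_prod, ← Finset.prod_mul_distrib]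
      apply Finset.prod_congr rfl
      intro p hp
      rw [Finset.mem_range] at hp
      have hpn : p ≤ n := by omega
      push_cast [Nat.cast_sub hpn]
      ring
    rw [hsimp, hnfac]
    have hcancel : ((Nat.factorial (n + 1 - i) : ℝ)) * ((Nat.factorial (n + 1 - i) : ℝ))⁻¹ = 1 :=
      mul_inv_cancel₀ hfne
    calc ((∏ p ∈ range (i - 1), (n - p) : ℕ) : ℝ) * (Nat.factorial (n + 1 - i) : ℝ)
          * ((∏ p ∈ range (i - 1), b / (1 - (p : ℝ) * b))
            * (e / (1 - ((i : ℝ) - 1) * b)) * ((Nat.factorial (n + 1 - i) : ℝ))⁻¹)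
        = ((∏ p ∈ range (i - 1), (n - p) : ℕ) : ℝ)
            * ((∏ p ∈ range (i - 1), b / (1 - (p : ℝ) * b))
              * (e / (1 - ((i : ℝ) - 1) * b)))
            * ((Nat.factorial (n + 1 - i) : ℝ) * ((Nat.factorial (n + 1 - i) : ℝ))⁻¹) := by
          ring
      _ = (((∏ p ∈ range (i - 1), (n - p) : ℕ) : ℝ)
            * (∏ p ∈ range (i - 1), b / (1 - (p : ℝ) * b)))
            * (e / (1 - ((i : ℝ) - 1) * b)) := by
          rw [hcancel, mul_one, ← mul_assoc]
  · -- second form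
    rw [hsum]
    have hsplit : ∏ p ∈ range i, (1 - (p : ℝ) * b)
        = (∏ p ∈ range (i - 1), (1 - (p : ℝ) * b)) * (1 - ((i : ℝ) - 1) * b) := by
      have hi' : i = (i - 1) + 1 := by omega
      rw [hi', Finset.prod_range_succ, ← hi']
      congr 2
      push_cast [Nat.cast_sub hi1]; ring
    have hhead' : ∏ p ∈ range (i - 1), b / (1 - (p : ℝ) * b)
        = b ^ (i - 1) / ∏ p ∈ range (i - 1), (1 - (p : ℝ) * b) := by
      rw [Finset.prod_div_distrib, Finset.prod_const, Finset.card_range]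
    rw [hsplit, hhead', show n + 1 - 1 = n by omega, div_mul_eq_div_div]
    ring
end

section
/- Let m ≥ 2, e ∈ (0,1), and b = (1−e)/(m−1), and let θ be the Plackett-Luce parameter over m alternatives with θ_1 = e and θ_j = b for all j ≥ 2. Fix 1 ≤ l ≤ m and a subset A' of l alternatives containing a_1. Then for every 1 ≤ i ≤ l, the total PL marginal probability of all l-way orders over A' that place a_1 at position i equals [∏_{q=1}^{i−1} (l−q)·b/(e + (l−q)·b)] · e/(e + (l−i)·b), which equals ((l−1)!/(l−i)!) · e · b^{i−1} / ∏_{p=l−i}^{l−1}(e + p·b). In particular this value does not depend on which size-l subset A' containing a_1 is chosen. -/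
open Finset

/-- PL marginal probability of the `l`-way order `σ 0 ≻ σ 1 ≻ ⋯ ≻ σ (l-1)`
over the subset `{σ 0, …, σ (l-1)}`:
`∏_{p=1}^{l-1} θ_{i_p} / (∑_{q=p}^{l} θ_{i_q})` (the factor at `p = l` equals `1`). -/
noncomputable def PLway {m l : ℕ} (θ : Fin m → ℝ) (σ : Fin l → Fin m) : ℝ :=
  ∏ p : Fin l, θ (σ p) / (∑ q ∈ univ.filter (fun q : Fin l => p ≤ q), θ (σ q))

/-!
Every order that is counted has weight `e` at position `i` and weight `b` everywhere else, so
all `(l - 1)!` of them have the same PL probability. Its suffix sums are `(l - p) b`, plus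
`e - b` as long as `a_1` is still to come; after `a_1` the factors `b / ((l - p) b)` multiply to
`1 / (l - i)!`, and the factors up to `a_1` give `e b^(i-1) / ∏_{p=l-i}^{l-1} (e + p b)`.
The product form follows by spreading `(l - 1)! / (l - i)! = ∏_{q=1}^{i-1} (l - q)` over
the factors.
-/

open Function

section Counting

variable {α β : Type*} [Fintype α] [DecidableEq α] [DecidableEq β]

omit [Fintype α] in
lemma injective_dite_of_embedding {a : α} {b : β} {s : Finset β}
    (g : {x // x ≠ a} ↪ s.erase b) :
    Injective fun x => if h : x = a then b else (g ⟨x, h⟩ : β) := by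
  have hne : ∀ y, (g y : β) ≠ b := fun y => (mem_erase.1 (g y).2).1
  intro x y hxy
  by_cases hx : x = a <;> by_cases hy : y = a <;>
    simp only [hx, hy, dite_true, dite_false] at hxy
  · exact hx.trans hy.symm
  · exact absurd hxy.symm (hne _)
  · exact absurd hxy (hne _)
  · exact congrArg Subtype.val (g.injective (Subtype.ext hxy))

def injOntoFixingEquivEmbedding {s : Finset β} (hs : #s = Fintype.card α) {a : α} {b : β}
    (hb : b ∈ s) :
    {σ : α → β // Injective σ ∧ image σ univ = s ∧ σ a = b} ≃ ({x // x ≠ a} ↪ s.erase b) where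
  toFun σ :=
    ⟨fun x => ⟨σ.1 x, mem_erase.2 ⟨fun h => x.2 (σ.2.1 (h.trans σ.2.2.2.symm)),
        (Finset.ext_iff.1 σ.2.2.1 _).1 (mem_image_of_mem _ (mem_univ _))⟩⟩,
      fun x y h => Subtype.ext (σ.2.1 (congrArg Subtype.val h))⟩
  invFun g := by
    refine ⟨fun x => if h : x = a then b else g ⟨x, h⟩, injective_dite_of_embedding g, ?_,
      by simp⟩
    -- an injection of `α` into `s` is onto, as `#s = card α`
    refine eq_of_subset_of_card_le (fun y hy => ?_) ?_
    · obtain ⟨x, -, rfl⟩ := mem_image.1 hy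
      split_ifs
      · exact hb
      · exact mem_of_mem_erase (g _).2
    · rw [card_image_of_injective _ (injective_dite_of_embedding g), card_univ, hs]
  left_inv σ := by
    ext x
    by_cases h : x = a
    · simp [h, σ.2.2.2]
    · simp only [h, dite_false]
      rfl
  right_inv g := by
    ext x
    simp [x.2]

theorem card_filter_injective_image_eq_apply_eq [Fintype β] {s : Finset β}
    (hs : #s = Fintype.card α) (a : α) {b : β} (hb : b ∈ s) :
    #{σ : α → β | Injective σ ∧ image σ univ = s ∧ σ a = b} =
      (Fintype.card α - 1).factorial := by
  rw [← Fintype.card_subtype, Fintype.card_congr (injOntoFixingEquivEmbedding hs hb),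
    Fintype.card_embedding_eq, Fintype.card_subtype_compl, Fintype.card_coe,
    card_erase_of_mem hb, hs, Fintype.card_subtype_eq, Nat.descFactorial_self]

end Counting

section SingleDistinguished

variable {e b : ℝ}

lemma sum_Ici_ite_eq {l : ℕ} (k p : Fin l) :
    ∑ q ∈ Ici p, (if q = k then e else b) =
      (l - p : ℕ) * b + if (p : ℕ) ≤ k then e - b else 0 := by
  calc ∑ q ∈ Ici p, (if q = k then e else b)
      = ∑ q ∈ Ici p, (b + if q = k then e - b else 0) :=
        sum_congr rfl fun q _ => by split_ifs <;> ring
    _ = _ := by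
        simp only [sum_add_distrib, sum_const, sum_ite_eq', Fin.card_Ici, mem_Ici, Fin.le_def,
          nsmul_eq_mul]

theorem PLway_eq_prod_range {m l : ℕ} {θ : Fin m → ℝ} {σ : Fin l → Fin m} {k : Fin l}
    (hw : ∀ q, θ (σ q) = if q = k then e else b) :
    PLway θ σ = ∏ p ∈ range l,
      (if p = k then e else b) / ((l - p : ℕ) * b + if p ≤ k then e - b else 0) := by
  rw [← Fin.prod_univ_eq_prod_range]
  refine prod_congr rfl fun p _ => ?_
  have hIci : univ.filter (fun q : Fin l => p ≤ q) = Ici p := by ext; simp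
  simp only [hw, hIci, sum_Ici_ite_eq, Fin.val_inj]

theorem prod_range_ite_div_eq (hb : b ≠ 0) {l i : ℕ} (hi : 1 ≤ i) (hil : i ≤ l) :
    ∏ p ∈ range l,
        (if p = i - 1 then e else b) / ((l - p : ℕ) * b + if p ≤ i - 1 then e - b else 0)
      = e * b ^ (i - 1) / (∏ j ∈ Ico (l - i) l, (e + j * b)) / (l - i).factorial := by
  obtain ⟨k, rfl⟩ : ∃ k, i = k + 1 := ⟨i - 1, by omega⟩
  obtain ⟨n, rfl⟩ : ∃ n, l = k + 1 + n := ⟨l - (k + 1), by omega⟩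
  simp only [Nat.add_sub_cancel, Nat.add_sub_cancel_left]
  have hhead : ∏ p ∈ range (k + 1),
      (if p = k then e else b) / ((k + 1 + n - p : ℕ) * b + if p ≤ k then e - b else 0)
        = e * b ^ k / ∏ j ∈ Ico n (k + 1 + n), (e + j * b) := by
    -- `k + 1 - 1 - p` is the shape `prod_range_reflect` expects
    calc _ = ∏ p ∈ range (k + 1),
            (if p = k then e else b) / (e + (n + (k + 1 - 1 - p) : ℕ) * b) :=
          prod_congr rfl fun p hp => by
            rw [mem_range] at hp
            rw [if_pos (show p ≤ k by omega),
              show k + 1 + n - p = n + (k + 1 - 1 - p) + 1 by omega]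
            push_cast
            ring
      _ = e * b ^ k / ∏ j ∈ range (k + 1), (e + (n + j : ℕ) * b) := by
          rw [prod_div_distrib, prod_range_reflect (fun j => e + (n + j : ℕ) * b),
            prod_range_succ, if_pos rfl,
            prod_congr rfl fun p hp => if_neg (by rw [mem_range] at hp; omega),
            prod_const, card_range, mul_comm (b ^ k)]
      _ = _ := by rw [prod_Ico_eq_prod_range, Nat.add_sub_cancel]
  have htail : ∏ x ∈ range n,
      (if k + 1 + x = k then e else b) /
        ((k + 1 + n - (k + 1 + x) : ℕ) * b + if k + 1 + x ≤ k then e - b else 0)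
        = ((n.factorial : ℕ) : ℝ)⁻¹ := by
    calc _ = ∏ x ∈ range n, ((n - x : ℕ) : ℝ)⁻¹ :=
          prod_congr rfl fun x _ => by
            rw [if_neg (by omega), if_neg (by omega), add_zero, Nat.add_sub_add_left,
              div_mul_cancel_right₀ hb]
      _ = _ := by
          rw [prod_inv_distrib, ← Nat.cast_prod, ← Nat.descFactorial_eq_prod_range,
            Nat.descFactorial_self]
  rw [prod_range_add, hhead, htail, ← div_eq_mul_inv]

theorem prod_Icc_mul_div_eq {l i : ℕ} (hi : 1 ≤ i) (hil : i ≤ l) :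
    (∏ q ∈ Icc 1 (i - 1), ((l : ℝ) - q) * b / (e + ((l : ℝ) - q) * b))
        * (e / (e + ((l : ℝ) - i) * b))
      = ((Nat.factorial (l - 1) : ℝ) / (Nat.factorial (l - i) : ℝ))
          * e * b ^ (i - 1) / ∏ p ∈ Ico (l - i) l, (e + (p : ℝ) * b) := by
  obtain ⟨k, rfl⟩ : ∃ k, i = k + 1 := ⟨i - 1, by omega⟩
  obtain ⟨n, rfl⟩ : ∃ n, l = k + 1 + n := ⟨l - (k + 1), by omega⟩
  have hreindex (f : ℝ → ℝ) :
      ∏ q ∈ Icc 1 k, f ((k + 1 + n : ℕ) - q) = ∏ j ∈ range k, f (n + (j + 1) : ℕ) :=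
    prod_nbij' (fun q => k - q) (fun j => k - j) (by intros; simp_all; omega)
      (by intros; simp_all; omega) (by intros; simp_all; omega) (by intros; simp_all; omega)
      fun q hq => by
        rw [mem_Icc] at hq
        congr 1
        push_cast [Nat.cast_sub hq.2]
        ring
  have hfact :
      ((k + n).factorial / n.factorial : ℝ) = ∏ j ∈ range k, ((n + (j + 1) : ℕ) : ℝ) := by
    rw [div_eq_iff (by positivity), ← Nat.cast_prod, ← Nat.cast_mul, Nat.add_comm k n,
      ← Nat.factorial_mul_ascFactorial, Nat.ascFactorial_eq_prod_range, mul_comm]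
    simp only [Nat.add_assoc, Nat.add_comm 1]
  have hden : ∏ p ∈ Ico n (k + 1 + n), (e + (p : ℝ) * b)
      = (∏ j ∈ range k, (e + ((n + (j + 1) : ℕ) : ℝ) * b)) * (e + n * b) := by
    rw [prod_Ico_eq_prod_range, show k + 1 + n - n = k + 1 by omega, prod_range_succ',
      Nat.add_zero]
  have hlast : ((k + 1 + n : ℕ) : ℝ) - ((k + 1 : ℕ) : ℝ) = n := by push_cast; ring
  rw [show k + 1 + n - 1 = k + n by omega, Nat.add_sub_cancel, Nat.add_sub_cancel_left,
    hreindex (fun x => x * b / (e + x * b)), hlast, hfact, hden, prod_div_distrib,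
    prod_mul_distrib, prod_const, card_range, div_mul_div_comm]
  ring

end SingleDistinguished

/-- **Equation (3) of the paper**: for the near-uniform PL parameter with
`θ_1 = e` and `θ_j = b = (1-e)/(m-1)` for `j ≥ 2`, and a subset `A'` of `l`
alternatives containing `a_1`, the total PL marginal probability of all `l`-way
orders over `A'` that place `a_1` at position `i` (`1 ≤ i ≤ l`) equals
`[∏_{q=1}^{i-1} (l-q)·b/(e+(l-q)·b)] · e/(e+(l-i)·b)`, which equals
`((l-1)!/(l-i)!) · e · b^{i-1} / ∏_{p=l-i}^{l-1} (e+p·b)`; in particular this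
value does not depend on which size-`l` subset `A'` containing `a_1` is
chosen. -/
theorem PL_lway_position_probability
    (m : ℕ) (hm : 2 ≤ m) (e : ℝ) (he : 0 < e ∧ e < 1)
    (b : ℝ) (hb : b = (1 - e) / ((m : ℝ) - 1))
    (θ : Fin m → ℝ) (hθ : ∀ j : Fin m, θ j = if (j : ℕ) = 0 then e else b)
    (l : ℕ)
    (A' : Finset (Fin m)) (hcard : A'.card = l) (hmem : (⟨0, by omega⟩ : Fin m) ∈ A')
    (i : ℕ) (hi1 : 1 ≤ i) (hil : i ≤ l) :
    (∑ σ ∈ univ.filter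
        (fun σ : Fin l → Fin m => Function.Injective σ ∧ image σ univ = A' ∧
          σ ⟨i - 1, by omega⟩ = ⟨0, by omega⟩),
        PLway θ σ
      = (∏ q ∈ Icc 1 (i - 1), ((l : ℝ) - q) * b / (e + ((l : ℝ) - q) * b))
          * (e / (e + ((l : ℝ) - i) * b)))
    ∧
    (∑ σ ∈ univ.filter
        (fun σ : Fin l → Fin m => Function.Injective σ ∧ image σ univ = A' ∧
          σ ⟨i - 1, by omega⟩ = ⟨0, by omega⟩),
        PLway θ σ
      = ((Nat.factorial (l - 1) : ℝ) / (Nat.factorial (l - i) : ℝ))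
          * e * b ^ (i - 1) / ∏ p ∈ Ico (l - i) l, (e + (p : ℝ) * b)) := by
  have hb0 : b ≠ 0 := by
    have hm1 : (m : ℝ) ≠ 1 := by exact_mod_cast (by omega : m ≠ 1)
    rw [hb]
    exact div_ne_zero (sub_ne_zero.2 he.2.ne') (sub_ne_zero.2 hm1)
  have hweight {σ : Fin l → Fin m} {k : Fin l} (hσ : Injective σ) (hk : σ k = ⟨0, by omega⟩)
      (q : Fin l) : θ (σ q) = if q = k then e else b := by
    simp only [hθ, ← hσ.eq_iff' hk, Fin.ext_iff]
  rw [prod_Icc_mul_div_eq hi1 hil, and_self, sum_congr rfl fun σ hσ =>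
      PLway_eq_prod_range (hweight (mem_filter.1 hσ).2.1 (mem_filter.1 hσ).2.2.2),
    sum_const,
    card_filter_injective_image_eq_apply_eq (hcard.trans (Fintype.card_fin l).symm) _ hmem,
    Fintype.card_fin, nsmul_eq_mul, prod_range_ite_div_eq hb0 hi1 hil]
  ring
end
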